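/- arXiv:1607.00426 — 3 statements merged into one kernel-verified Lean document; each statement's English description precedes it below -/
import Mathlib

section
/- Let λ₄ be a Young diagram and let μ be a Young diagram obtained from λ₄ by removing two nodes. If μ ⊆ λ₂ ⊆ λ₄ with |λ₂| = |μ| + 1, then either the two cells of λ₄ \ μ lie in the same row, or in the same column, or there exist exactly two such intermediate diagrams λ₂. -/
theorem youngDiagram_length_two_interval (μ l4 : YoungDiagram)
    (hle : μ ≤ l4) (hcard : l4.card = μ.card + 2)
    (c d : ℕ × ℕ) (hc : c ∈ l4.cells \ μ.cells) (hd : d ∈ l4.cells \ μ.cells)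
    (hcd : c ≠ d) :
    c.1 = d.1 ∨ c.2 = d.2 ∨
      ∃ a b : YoungDiagram, a ≠ b ∧
        ∀ x : YoungDiagram,
          (μ ≤ x ∧ x ≤ l4 ∧ x.card = μ.card + 1) ↔ (x = a ∨ x = b) := by
  by_cases h1 : c.1 = d.1
  · exact Or.inl h1
  by_cases h2 : c.2 = d.2
  · exact Or.inr (Or.inl h2)
  right; right
  have hsub : μ.cells ⊆ l4.cells := hle
  obtain ⟨hcl4, hcμ⟩ := Finset.mem_sdiff.mp hc
  obtain ⟨hdl4, hdμ⟩ := Finset.mem_sdiff.mp hd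
  have hcard' : l4.cells.card = μ.cells.card + 2 := hcard
  have hdiffcard : (l4.cells \ μ.cells).card = 2 := by
    rw [Finset.card_sdiff_of_subset hsub]; omega
  have hdiff : l4.cells \ μ.cells = {c, d} := by
    apply (Finset.eq_of_subset_of_card_le ?_ ?_).symm
    · intro x hx
      rcases Finset.mem_insert.mp hx with h | h
      · subst h; exact hc
      · rw [Finset.mem_singleton] at h; subst h; exact hd
    · rw [hdiffcard, Finset.card_insert_of_notMem (by simpa using hcd),
        Finset.card_singleton]
  -- incomparability
  have notdc : ¬ d ≤ c := by
    intro hdc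
    obtain ⟨hd1, hd2⟩ := Prod.le_def.mp hdc
    have hg4 : ((d.1, c.2) : ℕ × ℕ) ∈ l4.cells := l4.up_left_mem hd1 le_rfl hcl4
    have hgμ : ((d.1, c.2) : ℕ × ℕ) ∈ μ.cells := by
      by_contra hg
      have hmem : ((d.1, c.2) : ℕ × ℕ) ∈ l4.cells \ μ.cells :=
        Finset.mem_sdiff.mpr ⟨hg4, hg⟩
      rw [hdiff] at hmem
      rcases Finset.mem_insert.mp hmem with h | h
      · exact h1 (congrArg Prod.fst h).symm
      · rw [Finset.mem_singleton, Prod.ext_iff] at h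
        exact h2 h.2
    exact hdμ (μ.up_left_mem le_rfl hd2 hgμ)
  have notcd : ¬ c ≤ d := by
    intro hcd'
    obtain ⟨hd1, hd2⟩ := Prod.le_def.mp hcd'
    have hg4 : ((c.1, d.2) : ℕ × ℕ) ∈ l4.cells := l4.up_left_mem hd1 le_rfl hdl4
    have hgμ : ((c.1, d.2) : ℕ × ℕ) ∈ μ.cells := by
      by_contra hg
      have hmem : ((c.1, d.2) : ℕ × ℕ) ∈ l4.cells \ μ.cells :=
        Finset.mem_sdiff.mpr ⟨hg4, hg⟩
      rw [hdiff] at hmem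
      rcases Finset.mem_insert.mp hmem with h | h
      · exact h2 (congrArg Prod.snd h).symm
      · rw [Finset.mem_singleton, Prod.ext_iff] at h
        exact h1 h.1
    exact hcμ (μ.up_left_mem le_rfl hd2 hgμ)
  -- the two intermediate diagrams
  have lowA : IsLowerSet ((insert c μ.cells : Finset (ℕ × ℕ)) : Set (ℕ × ℕ)) := by
    intro p q hqp hp
    simp only [Finset.coe_insert, Set.mem_insert_iff, Finset.mem_coe] at hp ⊢
    rcases hp with rfl | hp
    · by_cases hq : q ∈ μ.cells
      · exact Or.inr hq
      · have hq4 : q ∈ l4.cells := l4.isLowerSet hqp hcl4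
        have hmem : q ∈ l4.cells \ μ.cells := Finset.mem_sdiff.mpr ⟨hq4, hq⟩
        rw [hdiff] at hmem
        rcases Finset.mem_insert.mp hmem with h | h
        · exact Or.inl h
        · rw [Finset.mem_singleton] at h; subst h
          exact absurd hqp notdc
    · exact Or.inr (μ.isLowerSet hqp hp)
  have lowB : IsLowerSet ((insert d μ.cells : Finset (ℕ × ℕ)) : Set (ℕ × ℕ)) := by
    intro p q hqp hp
    simp only [Finset.coe_insert, Set.mem_insert_iff, Finset.mem_coe] at hp ⊢
    rcases hp with rfl | hp
    · by_cases hq : q ∈ μ.cells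
      · exact Or.inr hq
      · have hq4 : q ∈ l4.cells := l4.isLowerSet hqp hdl4
        have hmem : q ∈ l4.cells \ μ.cells := Finset.mem_sdiff.mpr ⟨hq4, hq⟩
        rw [hdiff] at hmem
        rcases Finset.mem_insert.mp hmem with h | h
        · subst h; exact absurd hqp notcd
        · rw [Finset.mem_singleton] at h; exact Or.inl h
    · exact Or.inr (μ.isLowerSet hqp hp)
  refine ⟨⟨insert c μ.cells, lowA⟩, ⟨insert d μ.cells, lowB⟩, ?_, ?_⟩
  · intro h
    have : (insert c μ.cells : Finset (ℕ × ℕ)) = insert d μ.cells :=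
      congrArg YoungDiagram.cells h
    have hcmem : c ∈ (insert d μ.cells : Finset (ℕ × ℕ)) := by
      rw [← this]; exact Finset.mem_insert_self _ _
    rcases Finset.mem_insert.mp hcmem with h' | h'
    · exact hcd h'
    · exact hcμ h'
  · intro x
    constructor
    · rintro ⟨hμx, hxl4, hxcard⟩
      have hsubx : μ.cells ⊆ x.cells := hμx
      have hxcard' : x.cells.card = μ.cells.card + 1 := hxcard
      have hxdiffcard : (x.cells \ μ.cells).card = 1 := by
        rw [Finset.card_sdiff_of_subset hsubx]; omega
      obtain ⟨e, he⟩ := Finset.card_eq_one.mp hxdiffcard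
      have hesub : (x.cells \ μ.cells) ⊆ l4.cells \ μ.cells := by
        intro y hy
        rw [Finset.mem_sdiff] at hy ⊢
        exact ⟨hxl4 hy.1, hy.2⟩
      have hecells : x.cells = insert e μ.cells := by
        have := Finset.sdiff_union_of_subset hsubx
        rw [he] at this
        rw [← this, Finset.insert_eq]
      have hemem : e ∈ ({c, d} : Finset (ℕ × ℕ)) := by
        rw [← hdiff]
        exact hesub (he ▸ Finset.mem_singleton_self e)
      rcases Finset.mem_insert.mp hemem with h | h
      · left; ext1; rw [hecells, h]
      · rw [Finset.mem_singleton] at h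
        right; ext1; rw [hecells, h]
    · rintro (rfl | rfl)
      · refine ⟨fun y hy => Finset.mem_insert_of_mem hy, ?_, ?_⟩
        · intro y hy
          rcases Finset.mem_insert.mp hy with h | h
          · subst h; exact hcl4
          · exact hsub h
        · show (insert c μ.cells).card = μ.cells.card + 1
          rw [Finset.card_insert_of_notMem hcμ]
      · refine ⟨fun y hy => Finset.mem_insert_of_mem hy, ?_, ?_⟩
        · intro y hy
          rcases Finset.mem_insert.mp hy with h | h
          · subst h; exact hdl4
          · exact hsub h
        · show (insert d μ.cells).card = μ.cells.card + 1
          rw [Finset.card_insert_of_notMem hdμ]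
end

section
/- There exists a function s assigning to each covering pair (μ, λ) in the Young lattice (λ obtained from μ by adding one node) a sign s(μ,λ) ∈ {1, -1}, such that for every diamond (λ₁, λ₂, λ₃, λ₄) — where λ₂ ≠ λ₃ are both obtained from λ₁ by adding one node and λ₄ is obtained from each of λ₂, λ₃ by adding one node — we have s(λ₂,λ₄)·s(λ₁,λ₂) = − s(λ₃,λ₄)·s(λ₁,λ₃). -/
/-- `ν` is obtained from `μ` by adding exactly one node. -/
def YoungDiagram.Covers (μ ν : YoungDiagram) : Prop :=
  μ ≤ ν ∧ ν.card = μ.card + 1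

namespace YoungSign

/-- The row of the (unique, in the covering case) added cell. -/
def addedRow (μ ν : YoungDiagram) : ℕ := ((ν.cells \ μ.cells).sum Prod.fst)

/-- The sign function. -/
def sgn (μ ν : YoungDiagram) : ℤ :=
  (-1 : ℤ) ^ (μ.cells.filter (fun x => x.1 < addedRow μ ν)).card

lemma cover_insert {μ ν : YoungDiagram} (h : μ.Covers ν) :
    ∃ c, c ∉ μ.cells ∧ ν.cells = insert c μ.cells := by
  obtain ⟨hle, hcard⟩ := h
  have hsub : μ.cells ⊆ ν.cells := hle
  have h1 : (ν.cells \ μ.cells).card = 1 := by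
    rw [Finset.card_sdiff_of_subset hsub]
    have : ν.cells.card = μ.cells.card + 1 := hcard
    omega
  obtain ⟨c, hc⟩ := Finset.card_eq_one.mp h1
  have hcm : c ∈ ν.cells \ μ.cells := by rw [hc]; exact Finset.mem_singleton_self c
  rw [Finset.mem_sdiff] at hcm
  refine ⟨c, hcm.2, ?_⟩
  ext x
  simp only [Finset.mem_insert]
  constructor
  · intro hx
    by_cases hxμ : x ∈ μ.cells
    · exact Or.inr hxμ
    · left
      have : x ∈ ν.cells \ μ.cells := Finset.mem_sdiff.mpr ⟨hx, hxμ⟩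
      rw [hc] at this; simpa using this
  · rintro (rfl | hx)
    · exact hcm.1
    · exact hsub hx

lemma addedRow_insert {μ ν : YoungDiagram} (c : ℕ × ℕ) (hc : c ∉ μ.cells)
    (hν : ν.cells = insert c μ.cells) : addedRow μ ν = c.1 := by
  unfold addedRow
  have : ν.cells \ μ.cells = {c} := by
    rw [hν]
    ext x
    simp only [Finset.mem_sdiff, Finset.mem_insert, Finset.mem_singleton]
    constructor
    · rintro ⟨rfl | hx, hx'⟩
      · rfl
      · exact absurd hx hx'
    · rintro rfl; exact ⟨Or.inl rfl, hc⟩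
  rw [this, Finset.sum_singleton]

lemma filter_card_insert (μ : YoungDiagram) (c : ℕ × ℕ) (hc : c ∉ μ.cells) (r : ℕ) :
    ((insert c μ.cells).filter (fun x => x.1 < r)).card =
      (if c.1 < r then 1 else 0) + (μ.cells.filter (fun x => x.1 < r)).card := by
  rw [Finset.filter_insert]
  split_ifs with h
  · rw [Finset.card_insert_of_notMem (by simp [hc])]
    omega
  · omega

end YoungSign

theorem youngDiagram_exists_signs :
    ∃ s : YoungDiagram → YoungDiagram → ℤ,
      (∀ μ l : YoungDiagram, μ.Covers l → s μ l = 1 ∨ s μ l = -1) ∧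
      ∀ l1 l2 l3 l4 : YoungDiagram,
        l2 ≠ l3 → l1.Covers l2 → l1.Covers l3 → l2.Covers l4 → l3.Covers l4 →
        s l2 l4 * s l1 l2 = -(s l3 l4 * s l1 l3) := by
  classical
  refine ⟨YoungSign.sgn, fun μ l _ => neg_one_pow_eq_or ℤ _, ?_⟩
  -- symmetric core
  suffices key : ∀ l1 l2 l3 l4 : YoungDiagram, ∀ c c' : ℕ × ℕ,
      c ∉ l1.cells → l2.cells = insert c l1.cells →
      c' ∉ l1.cells → l3.cells = insert c' l1.cells →
      c' ∉ l2.cells → l4.cells = insert c' l2.cells →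
      c.1 < c'.1 →
      YoungSign.sgn l2 l4 * YoungSign.sgn l1 l2 =
        -(YoungSign.sgn l3 l4 * YoungSign.sgn l1 l3) by
    intro l1 l2 l3 l4 hne h12 h13 h24 h34
    obtain ⟨c, hc1, hc2⟩ := YoungSign.cover_insert h12
    obtain ⟨c', hc'1, hc'2⟩ := YoungSign.cover_insert h13
    obtain ⟨e, he1, he2⟩ := YoungSign.cover_insert h24
    obtain ⟨e', he'1, he'2⟩ := YoungSign.cover_insert h34
    -- c ≠ c'
    have hcc' : c ≠ c' := by
      rintro rfl
      exact hne (YoungDiagram.ext (by rw [hc2, hc'2]))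
    -- c' ∉ l2.cells
    have hc'2' : c' ∉ l2.cells := by
      rw [hc2]; simp only [Finset.mem_insert]
      rintro (rfl | h) <;> [exact hcc' rfl; exact hc'1 h]
    have hc3' : c ∉ l3.cells := by
      rw [hc'2]; simp only [Finset.mem_insert]
      rintro (rfl | h) <;> [exact hcc' rfl; exact hc1 h]
    -- e = c'
    have hec' : e = c' := by
      have hc'4 : c' ∈ l4.cells := by
        have : c' ∈ l3.cells := by rw [hc'2]; exact Finset.mem_insert_self _ _
        exact h34.1 this
      rw [he2, Finset.mem_insert] at hc'4
      rcases hc'4 with h | h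
      · exact h.symm
      · exact absurd h hc'2'
    have he'c : e' = c := by
      have hc4 : c ∈ l4.cells := by
        have : c ∈ l2.cells := by rw [hc2]; exact Finset.mem_insert_self _ _
        exact h24.1 this
      rw [he'2, Finset.mem_insert] at hc4
      rcases hc4 with h | h
      · exact h.symm
      · exact absurd h hc3'
    rw [hec'] at he2
    rw [he'c] at he'2
    -- rows are distinct
    have hrow : c.1 ≠ c'.1 := by
      intro hr
      rcases Nat.lt_trichotomy c.2 c'.2 with hj | hj | hj
      · -- c ∈ l3 by lower-set, hence c ∈ l1, contradiction
        have hcl3 : c ∈ l3 := by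
          apply l3.up_left_mem (le_of_eq hr) (le_of_lt hj)
          show c' ∈ l3.cells
          rw [hc'2]; exact Finset.mem_insert_self _ _
        exact hc3' hcl3
      · exact hcc' (Prod.ext hr hj)
      · have hcl2 : c' ∈ l2 := by
          apply l2.up_left_mem (le_of_eq hr.symm) (le_of_lt hj)
          show c ∈ l2.cells
          rw [hc2]; exact Finset.mem_insert_self _ _
        exact hc'2' hcl2
    rcases Nat.lt_or_ge c.1 c'.1 with h | h
    · exact key l1 l2 l3 l4 c c' hc1 hc2 hc'1 hc'2 hc'2' he2 h
    · have h' : c'.1 < c.1 := lt_of_le_of_ne h (Ne.symm hrow)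
      have := key l1 l3 l2 l4 c' c hc'1 hc'2 hc1 hc2 hc3' he'2 h'
      linarith
  -- the core computation
  intro l1 l2 l3 l4 c c' hc1 hc2 hc'1 hc'2 hc'2' h42 hlt
  have hr12 : YoungSign.addedRow l1 l2 = c.1 := YoungSign.addedRow_insert c hc1 hc2
  have hr13 : YoungSign.addedRow l1 l3 = c'.1 := YoungSign.addedRow_insert c' hc'1 hc'2
  have hr24 : YoungSign.addedRow l2 l4 = c'.1 := YoungSign.addedRow_insert c' hc'2' h42
  have hr34 : YoungSign.addedRow l3 l4 = c.1 := by
    apply YoungSign.addedRow_insert c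
    · rw [hc'2]; simp only [Finset.mem_insert]
      rintro (h | h)
      · exact absurd (Prod.ext_iff.mp h).1 (Nat.ne_of_lt hlt)
      · exact hc1 h
    · rw [h42, hc2, hc'2]
      ext x
      simp only [Finset.mem_insert]
      tauto
  unfold YoungSign.sgn
  rw [hr12, hr13, hr24, hr34, hc2, hc'2]
  rw [YoungSign.filter_card_insert l1 c hc1 c'.1, YoungSign.filter_card_insert l1 c' hc'1 c.1]
  rw [if_pos hlt, if_neg (by omega)]
  set A := (l1.cells.filter (fun x => x.1 < c.1)).card
  set B := (l1.cells.filter (fun x => x.1 < c'.1)).card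
  rw [show 1 + B = B + 1 by omega, pow_succ]
  ring
end

section
/- Fix a Young diagram ξ. For i ≥ 0, let I_i be the set of Young diagrams obtained from ξ by adding i nodes, no two of which lie in the same row (vertical strips over ξ). If ν is a Young diagram covering some μ ∈ I_k (ξ plus a vertical strip of size k) and ν is not in I_{k+1}, then there is exactly one μ ∈ I_k covered by ν. -/
/-- `l` belongs to `I ξ k`: `l ⊇ ξ`, `|l| = |ξ| + k`, and `l \ ξ` is a
vertical strip (no two cells in the same row). -/
def YoungDiagram.MemI (ξ : YoungDiagram) (k : ℕ) (l : YoungDiagram) : Prop :=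
  ξ ≤ l ∧ l.card = ξ.card + k ∧
    ∀ c d : ℕ × ℕ, c ∈ l.cells \ ξ.cells → d ∈ l.cells \ ξ.cells →
      c ≠ d → c.1 ≠ d.1

/-- From a solution `μ`, extract the unique cell of `ν` missing from `μ`,
which must be one of `c, d` and must be a removable (corner) cell of `ν`. -/
lemma aux_cell (ξ : YoungDiagram) (k : ℕ) (ν μ : YoungDiagram)
    (h : ξ.MemI k μ ∧ μ.Covers ν) {c d : ℕ × ℕ}
    (hc : c ∈ ν.cells \ ξ.cells) (hd : d ∈ ν.cells \ ξ.cells)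
    (hcd : c ≠ d) (hrow : c.1 = d.1) :
    ∃ e : ℕ × ℕ, μ.cells = ν.cells \ {e} ∧ (e = c ∨ e = d) ∧
      e ∈ ν ∧ (e.1, e.2 + 1) ∉ ν := by
  obtain ⟨⟨hξμ, hμcard, hvs⟩, hμν, hνcard⟩ := h
  have hsub : μ.cells ⊆ ν.cells := hμν
  have hcard1 : (ν.cells \ μ.cells).card = 1 := by
    rw [Finset.card_sdiff_of_subset hsub]
    have h1 : ν.cells.card = μ.cells.card + 1 := hνcard
    omega
  obtain ⟨e, he⟩ := Finset.card_eq_one.mp hcard1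
  have heν : e ∈ ν.cells := (Finset.mem_sdiff.mp (he ▸ Finset.mem_singleton_self e)).1
  have heμ : e ∉ μ.cells := (Finset.mem_sdiff.mp (he ▸ Finset.mem_singleton_self e)).2
  have hμcells : μ.cells = ν.cells \ {e} := by
    rw [← he, Finset.sdiff_sdiff_self_left]
    exact (Finset.inter_eq_right.mpr hsub).symm
  refine ⟨e, hμcells, ?_, heν, ?_⟩
  · -- e = c or e = d
    by_contra h
    push_neg at h
    have hcμ : c ∈ μ.cells \ ξ.cells := by
      rw [hμcells]
      simp only [Finset.mem_sdiff, Finset.mem_singleton] at hc ⊢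
      exact ⟨⟨hc.1, fun hce => h.1 (hce ▸ rfl)⟩, hc.2⟩
    have hdμ : d ∈ μ.cells \ ξ.cells := by
      rw [hμcells]
      simp only [Finset.mem_sdiff, Finset.mem_singleton] at hd ⊢
      exact ⟨⟨hd.1, fun hde => h.2 (hde ▸ rfl)⟩, hd.2⟩
    exact hvs c d hcμ hdμ hcd hrow
  · -- (e.1, e.2 + 1) ∉ ν
    intro hsucc
    have hne : (e.1, e.2 + 1) ≠ e := by
      intro h'
      have := congrArg Prod.snd h'
      simp at this
    have hmem : (e.1, e.2 + 1) ∈ μ.cells := by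
      rw [hμcells]
      simp only [Finset.mem_sdiff, Finset.mem_singleton]
      exact ⟨hsucc, hne⟩
    have : (e.1, e.2) ∈ μ :=
      μ.up_left_mem le_rfl (Nat.le_succ _) hmem
    exact heμ this

theorem youngDiagram_unique_vertical_strip_predecessor (ξ : YoungDiagram)
    (k : ℕ) (ν : YoungDiagram)
    (hex : ∃ μ : YoungDiagram, ξ.MemI k μ ∧ μ.Covers ν)
    (hnot : ¬ ξ.MemI (k + 1) ν) :
    ∃! μ : YoungDiagram, ξ.MemI k μ ∧ μ.Covers ν := by
  obtain ⟨μ₀, hμ₀⟩ := hex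
  have hξν : ξ ≤ ν := le_trans hμ₀.1.1 hμ₀.2.1
  have hνcard : ν.card = ξ.card + (k + 1) := by
    rw [hμ₀.2.2, hμ₀.1.2.1]; ring
  have hfail : ∃ c d : ℕ × ℕ, c ∈ ν.cells \ ξ.cells ∧ d ∈ ν.cells \ ξ.cells ∧
      c ≠ d ∧ c.1 = d.1 := by
    by_contra h
    push_neg at h
    exact hnot ⟨hξν, hνcard, fun c d hc hd hne => h c d hc hd hne⟩
  obtain ⟨c, d, hc, hd, hcd, hrow⟩ := hfail
  have key : ∀ μ₁ μ₂ : YoungDiagram, (ξ.MemI k μ₁ ∧ μ₁.Covers ν) →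
      (ξ.MemI k μ₂ ∧ μ₂.Covers ν) → μ₁ = μ₂ := by
    intro μ₁ μ₂ h₁ h₂
    obtain ⟨e₁, hm₁, hcd₁, he₁ν, he₁s⟩ := aux_cell ξ k ν μ₁ h₁ hc hd hcd hrow
    obtain ⟨e₂, hm₂, hcd₂, he₂ν, he₂s⟩ := aux_cell ξ k ν μ₂ h₂ hc hd hcd hrow
    have hee : e₁ = e₂ := by
      by_contra hne
      have hrow12 : e₁.1 = e₂.1 := by
        rcases hcd₁ with h1 | h1 <;> rcases hcd₂ with h2 | h2 <;>
          simp_all [hrow, hrow.symm]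
      rcases Nat.lt_trichotomy e₁.2 e₂.2 with hlt | heq | hgt
      · exact he₁s (ν.up_left_mem hrow12.le hlt he₂ν)
      · exact hne (Prod.ext hrow12 heq)
      · exact he₂s (ν.up_left_mem hrow12.ge hgt he₁ν)
    have : μ₁.cells = μ₂.cells := by rw [hm₁, hm₂, hee]
    cases μ₁; cases μ₂; simpa using this
  exact ⟨μ₀, hμ₀, fun μ h => key μ μ₀ h hμ₀⟩
end
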